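/- arXiv:2001.07932 — 4 statements merged into one kernel-verified Lean document; each statement's English description precedes it below -/
import Mathlib

section
/- Let φ denote the standard normal density φ(t) = (1/√(2π)) e^{−t²/2} and Φ the standard normal cumulative distribution function. Then for every x ∈ ℝ, ∫_{−∞}^{x} t(t−x) φ(t) dt = Φ(x). Equivalently, if X is a standard normal random variable then E[X(X−x) 1{X ≤ x}] = Φ(x) for all x ∈ ℝ. -/
/-!
Since `φ' = -((t - μ) / v) φ` for the density `φ` of `𝒩(μ, v)`, the function `v (x - t) φ(t)` is
a primitive of `((t - μ) (t - x) - v) φ(t)`. It vanishes at `t = x`, and at `-∞` because both it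
and its derivative are integrable (Gaussian moments are finite). Hence
`∫_{t ≤ x} (t - μ) (t - x) φ(t) dt = v Φ(x)`, which for `μ = 0`, `v = 1` is the claim.
-/

open MeasureTheory Real Set
open scoped NNReal

namespace ProbabilityTheory

lemma hasDerivAt_gaussianPDFReal (μ : ℝ) (v : ℝ≥0) (t : ℝ) :
    HasDerivAt (gaussianPDFReal μ v) (-((t - μ) / v) * gaussianPDFReal μ v t) t := by
  have hexponent : HasDerivAt (fun s ↦ -(s - μ) ^ 2 / (2 * v)) (-((t - μ) / v)) t :=
    ((((hasDerivAt_id' t).sub_const μ).fun_pow 2).fun_neg.div_const _).congr_deriv (by ring)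
  rw [gaussianPDFReal_def]
  exact (hexponent.exp.const_mul _).congr_deriv (by ring)

lemma integrable_gaussianReal_iff {μ : ℝ} {v : ℝ≥0} (hv : v ≠ 0) {f : ℝ → ℝ} :
    Integrable f (gaussianReal μ v) ↔ Integrable fun t ↦ gaussianPDFReal μ v t * f t := by
  rw [gaussianReal_of_var_ne_zero μ hv, integrable_withDensity_iff_integrable_smul'
    (measurable_gaussianPDF μ v) (ae_of_all _ fun _ ↦ gaussianPDF_lt_top)]
  simp [toReal_gaussianPDF]

lemma setIntegral_gaussianReal_eq_setIntegral_mul {μ : ℝ} {v : ℝ≥0} (hv : v ≠ 0) {s : Set ℝ}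
    (hs : MeasurableSet s) (f : ℝ → ℝ) :
    ∫ t in s, f t ∂gaussianReal μ v = ∫ t in s, gaussianPDFReal μ v t * f t := by
  rw [← integral_indicator hs, ← integral_indicator hs, integral_gaussianReal_eq_integral_smul hv]
  congr 1 with t
  by_cases ht : t ∈ s <;> simp [ht]

lemma integrable_mul_sub_gaussianReal (μ : ℝ) (v : ℝ≥0) (a b : ℝ) :
    Integrable (fun t ↦ (t - a) * (t - b)) (gaussianReal μ v) :=
  ((memLp_id_gaussianReal' 2 ENNReal.ofNat_ne_top).sub (memLp_const a)).integrable_mul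
    ((memLp_id_gaussianReal' 2 ENNReal.ofNat_ne_top).sub (memLp_const b))

lemma setIntegral_Iic_mul_sub_sub_var_gaussianReal_eq_zero (μ : ℝ) {v : ℝ≥0} (hv : v ≠ 0)
    (x : ℝ) :
    ∫ t in Iic x, ((t - μ) * (t - x) - v) ∂gaussianReal μ v = 0 := by
  set φ := gaussianPDFReal μ v
  have hderiv (t : ℝ) :
      HasDerivAt (fun s ↦ v * ((x - s) * φ s)) (φ t * ((t - μ) * (t - x) - v)) t :=
    ((((hasDerivAt_id' t).const_sub x).mul (hasDerivAt_gaussianPDFReal μ v t)).const_mul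
      (v : ℝ)).congr_deriv (by field_simp; ring)
  have hint_deriv : Integrable fun t ↦ φ t * ((t - μ) * (t - x) - v) :=
    (integrable_gaussianReal_iff hv).1 ((integrable_mul_sub_gaussianReal μ v μ x).sub
      (integrable_const _))
  have hint : Integrable fun s ↦ v * ((x - s) * φ s) := by
    have : Integrable (fun s ↦ v * (x - s)) (gaussianReal μ v) :=
      ((integrable_const x).sub (memLp_one_iff_integrable.1
        (memLp_id_gaussianReal' 1 ENNReal.one_ne_top))).const_mul _
    exact ((integrable_gaussianReal_iff hv).1 this).congr (ae_of_all _ fun s ↦ by ring)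
  have hlim := tendsto_zero_of_hasDerivAt_of_integrableOn_Iic (a := x) (fun t _ ↦ hderiv t)
    hint_deriv.integrableOn hint.integrableOn
  rw [setIntegral_gaussianReal_eq_setIntegral_mul hv measurableSet_Iic,
    integral_Iic_of_hasDerivAt_of_tendsto' (fun t _ ↦ hderiv t) hint_deriv.integrableOn hlim]
  simp

lemma setIntegral_Iic_mul_sub_gaussianReal (μ : ℝ) (v : ℝ≥0) (x : ℝ) :
    ∫ t in Iic x, (t - μ) * (t - x) ∂gaussianReal μ v = v * cdf (gaussianReal μ v) x := by
  rcases eq_or_ne v 0 with rfl | hv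
  · simp [gaussianReal_zero_var, setIntegral_dirac]
  have h := setIntegral_Iic_mul_sub_sub_var_gaussianReal_eq_zero μ hv x
  rw [integral_sub (integrable_mul_sub_gaussianReal μ v μ x).integrableOn
    (integrable_const _).integrableOn, setIntegral_const, sub_eq_zero] at h
  rw [h, cdf_eq_real, smul_eq_mul, mul_comm]

lemma gaussianPDFReal_zero_one (t : ℝ) :
    gaussianPDFReal 0 1 t = (√(2 * π))⁻¹ * exp (-t ^ 2 / 2) := by
  simp [gaussianPDFReal]

end ProbabilityTheory

open ProbabilityTheory

/-- For the standard normal density `φ(t) = (2π)^{-1/2} e^{-t²/2}` and the standard normal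
cdf `Φ`, one has `∫_{-∞}^x t (t - x) φ(t) dt = Φ(x)` for every `x ∈ ℝ`; equivalently, if
`X` is standard normal then `E[X (X - x) 1{X ≤ x}] = Φ(x)`. -/
theorem integral_stdNormal_eq_cdf (x : ℝ) :
    (∫ t in Set.Iic x, t * (t - x) * ((Real.sqrt (2 * Real.pi))⁻¹ * Real.exp (-t ^ 2 / 2))) =
      cdf (gaussianReal 0 1) x ∧
    (∫ t in Set.Iic x, t * (t - x) ∂(gaussianReal 0 1)) = cdf (gaussianReal 0 1) x := by
  have h := setIntegral_Iic_mul_sub_gaussianReal 0 1 x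
  simp only [sub_zero, NNReal.coe_one, one_mul] at h
  refine ⟨?_, h⟩
  rw [← h, setIntegral_gaussianReal_eq_setIntegral_mul one_ne_zero measurableSet_Iic]
  simp only [gaussianPDFReal_zero_one, mul_comm]
end

section
/- Let X be a real-valued random variable whose law μ is an atomless (continuous) probability measure on ℝ with mean 0 and variance 1, and let F(x) = μ((−∞, x]) be its cumulative distribution function. Then X has the standard normal distribution if and only if F(x) = e_X(x) for all x ∈ ℝ, where e_X(x) = E[X(X−x) 1{X ≤ x}]. -/
open MeasureTheory ProbabilityTheory Real Filter Set Topology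
open scoped NNReal ENNReal

namespace BetschEbnerAux

variable {μ : Measure ℝ}

lemma integrable_id_of_sq [IsFiniteMeasure μ]
    (h2 : Integrable (fun t : ℝ => t ^ 2) μ) : Integrable (fun t : ℝ => t) μ := by
  refine (h2.add (integrable_const 1)).mono measurable_id.aestronglyMeasurable
    (ae_of_all _ fun t => ?_)
  have h1 : (0:ℝ) ≤ t ^ 2 + 1 := by positivity
  have h2' : |t| ≤ t ^ 2 + 1 := by nlinarith [sq_abs t, abs_nonneg t]
  simpa [Real.norm_eq_abs, abs_of_nonneg h1] using h2'

lemma key_swap [IsProbabilityMeasure μ]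
    (h2 : Integrable (fun t : ℝ => t ^ 2) μ) (x : ℝ) :
    IntegrableOn (fun u => ∫ t in Set.Iic u, t ∂μ) (Set.Iic x) volume ∧
      ∫ u in Set.Iic x, (∫ t in Set.Iic u, t ∂μ) = ∫ t in Set.Iic x, t * (x - t) ∂μ := by
  have ht1 : Integrable (fun t : ℝ => t) μ := integrable_id_of_sq h2
  set k : ℝ → ℝ → ℝ := fun u t => Set.indicator (Set.Iic u) id t with hk
  have hkmeas : Measurable (Function.uncurry k) := by
    have heq : Function.uncurry k = Set.indicator {p : ℝ × ℝ | p.2 ≤ p.1} (fun p => p.2) := by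
      ext ⟨u, t⟩
      by_cases h : t ≤ u <;> simp [Function.uncurry, hk, Set.indicator, h]
    rw [heq]
    exact measurable_snd.indicator (measurableSet_le measurable_snd measurable_fst)
  have hfix : ∀ t : ℝ, (fun u => k u t) = Set.indicator (Set.Ici t) (fun _ => t) := by
    intro t; ext u
    by_cases h : t ≤ u <;> simp [hk, Set.indicator, h]
  have hfixn : ∀ t : ℝ, (fun u => ‖k u t‖) = Set.indicator (Set.Ici t) (fun _ => |t|) := by
    intro t; ext u
    by_cases h : t ≤ u <;> simp [hk, Set.indicator, h]
  have hmeasIcc : ∀ t : ℝ, ((volume.restrict (Set.Iic x)) (Set.Ici t)).toReal = max (x - t) 0 := by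
    intro t
    rw [Measure.restrict_apply measurableSet_Ici, Set.Ici_inter_Iic, Real.volume_Icc]
    exact ENNReal.toReal_ofReal'
  have hinner : ∀ t : ℝ, (∫ u in Set.Iic x, k u t) = t * max (x - t) 0 := by
    intro t
    rw [hfix t, integral_indicator measurableSet_Ici, setIntegral_const, measureReal_def, hmeasIcc t,
      smul_eq_mul, mul_comm]
  have hinnern : ∀ t : ℝ, (∫ u in Set.Iic x, ‖k u t‖) = |t| * max (x - t) 0 := by
    intro t
    rw [hfixn t, integral_indicator measurableSet_Ici, setIntegral_const, measureReal_def, hmeasIcc t,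
      smul_eq_mul, mul_comm]
  have hint : Integrable (Function.uncurry k) ((volume.restrict (Set.Iic x)).prod μ) := by
    rw [integrable_prod_iff' hkmeas.aestronglyMeasurable]
    constructor
    · refine ae_of_all _ fun t => ?_
      show Integrable (fun u => k u t) _
      rw [hfix t]
      refine (integrableOn_const ?_).integrable_indicator measurableSet_Ici
      rw [Measure.restrict_apply measurableSet_Ici, Set.Ici_inter_Iic, Real.volume_Icc]
      exact ENNReal.ofReal_lt_top.ne
    · have heq2 : (fun t => ∫ u in Set.Iic x, ‖k u t‖) = fun t => |t| * max (x - t) 0 :=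
        funext hinnern
      show Integrable (fun t => ∫ u in Set.Iic x, ‖k u t‖) μ
      rw [heq2]
      refine ((ht1.norm.const_mul |x|).add h2).mono
        ((continuous_abs.mul ((continuous_const.sub continuous_id).max
          continuous_const)).aestronglyMeasurable) (ae_of_all _ fun t => ?_)
      have h0 : (0:ℝ) ≤ |t| * max (x - t) 0 := by positivity
      have hb : max (x - t) 0 ≤ |x| + |t| := by
        refine max_le ?_ (by positivity)
        have h1 := neg_abs_le t
        have h2 := le_abs_self x
        linarith
      simp only [Pi.add_apply, Real.norm_eq_abs, abs_of_nonneg h0]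
      calc |t| * max (x - t) 0 ≤ |t| * (|x| + |t|) :=
            mul_le_mul_of_nonneg_left hb (abs_nonneg t)
        _ = |x| * |t| + t ^ 2 := by rw [← sq_abs]; ring
        _ ≤ |(|x| * |t| + t ^ 2)| := le_abs_self _
  have hG : (fun u => ∫ t, k u t ∂μ) = fun u => ∫ t in Set.Iic u, t ∂μ := by
    funext u
    show (∫ t, Set.indicator (Set.Iic u) id t ∂μ) = _
    rw [integral_indicator measurableSet_Iic]
    rfl
  constructor
  · have h1 := hint.integral_prod_left
    exact hG ▸ h1
  · have hswap := integral_integral_swap (f := k) hint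
    calc ∫ u in Set.Iic x, (∫ t in Set.Iic u, t ∂μ)
        = ∫ u in Set.Iic x, (∫ t, k u t ∂μ) := by rw [hG]
      _ = ∫ t, (∫ u in Set.Iic x, k u t) ∂μ := hswap
      _ = ∫ t, t * max (x - t) 0 ∂μ := by
          refine integral_congr_ae (ae_of_all _ fun t => ?_)
          exact hinner t
      _ = ∫ t in Set.Iic x, t * (x - t) ∂μ := by
          rw [← integral_indicator measurableSet_Iic]
          refine integral_congr_ae (ae_of_all _ fun t => ?_)
          by_cases h : t ≤ x
          · simp only [Set.indicator_of_mem (Set.mem_Iic.2 h),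
              max_eq_left (by linarith : (0:ℝ) ≤ x - t)]
          · push_neg at h
            simp only [Set.indicator_of_notMem (by simpa using h.not_ge : t ∉ Set.Iic x),
              max_eq_right (by linarith : x - t ≤ (0:ℝ)), mul_zero]


lemma continuous_G [IsProbabilityMeasure μ] [NullSingletonClass μ]
    (h2 : Integrable (fun t : ℝ => t ^ 2) μ) :
    Continuous (fun u => ∫ t in Set.Iic u, t ∂μ) := by
  have ht1 : Integrable (fun t : ℝ => t) μ := integrable_id_of_sq h2
  have hc := ht1.continuous_primitive 0
  have heq : (fun u => ∫ t in Set.Iic u, t ∂μ)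
      = fun u => (∫ t in Set.Iic (0:ℝ), t ∂μ) + ∫ t in (0:ℝ)..u, t ∂μ := by
    funext u
    rw [← intervalIntegral.integral_Iic_sub_Iic ht1.integrableOn ht1.integrableOn]
    ring
  rw [heq]
  exact continuous_const.add hc

lemma pdf_eq (x : ℝ) :
    gaussianPDFReal 0 1 x = (Real.sqrt (2 * π))⁻¹ * Real.exp (-x ^ 2 / 2) := by
  simp [gaussianPDFReal]

lemma hasDerivAt_gauss (c t : ℝ) :
    HasDerivAt (fun s : ℝ => c * Real.exp (-s ^ 2 / 2))
      (-(c * Real.exp (-t ^ 2 / 2) * t)) t := by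
  have h1 : HasDerivAt (fun s : ℝ => -s ^ 2 / 2) (-t) t := by
    have h := ((hasDerivAt_pow 2 t).neg).div_const 2
    norm_num at h
    exact h.congr_deriv (by ring)
  have h2 := (h1.exp).const_mul c
  exact h2.congr_deriv (by ring)

lemma tendsto_gauss_atBot (c : ℝ) :
    Tendsto (fun s : ℝ => c * Real.exp (-s ^ 2 / 2)) atBot (𝓝 0) := by
  have h1 : Tendsto (fun s : ℝ => s ^ 2) atBot atTop := by
    have := (tendsto_pow_atTop (α := ℝ) (n := 2) (by norm_num)).comp (tendsto_neg_atBot_atTop (G := ℝ))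
    simpa [Function.comp_def, neg_pow] using this
  have h2 : Tendsto (fun s : ℝ => -s ^ 2 / 2) atBot atBot := by
    have := (tendsto_neg_atTop_atBot.comp h1).atBot_div_const (by norm_num : (0:ℝ) < 2)
    simpa [Function.comp_def] using this
  have h3 := Real.tendsto_exp_atBot.comp h2
  have := h3.const_mul c
  simpa using this


lemma integrableOn_gauss_mul_id (u : ℝ)
    (ht1 : Integrable (fun t : ℝ => t) (gaussianReal 0 1)) :
    IntegrableOn (fun t => gaussianPDFReal 0 1 t * t) (Set.Iic u) volume := by
  have h := ht1.integrableOn (s := Set.Iic u)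
  rw [IntegrableOn, gaussianReal_of_var_ne_zero 0 one_ne_zero,
    restrict_withDensity measurableSet_Iic,
    integrable_withDensity_iff (measurable_gaussianPDF 0 1)
      (ae_of_all _ fun _ => ENNReal.ofReal_lt_top)] at h
  refine h.congr (ae_of_all _ fun t => ?_)
  show t * (gaussianPDF 0 1 t).toReal = _
  rw [gaussianPDF, ENNReal.toReal_ofReal (gaussianPDFReal_nonneg _ _ _), mul_comm]

lemma gaussian_G (u : ℝ)
    (ht1 : Integrable (fun t : ℝ => t) (gaussianReal 0 1)) :
    ∫ t in Set.Iic u, t ∂(gaussianReal 0 1) = -gaussianPDFReal 0 1 u := by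
  have hint := integrableOn_gauss_mul_id u ht1
  set c := (Real.sqrt (2 * π))⁻¹ with hc
  have h1 : ∫ t in Set.Iic u, t ∂(gaussianReal 0 1)
      = ∫ t in Set.Iic u, gaussianPDFReal 0 1 t * t := by
    rw [gaussianReal_of_var_ne_zero 0 one_ne_zero, restrict_withDensity measurableSet_Iic]
    rw [show gaussianPDF 0 1 = fun x => (((gaussianPDFReal 0 1 x).toNNReal : ℝ≥0) : ℝ≥0∞) from rfl]
    rw [integral_withDensity_eq_integral_smul
      ((measurable_gaussianPDFReal 0 1).real_toNNReal)]
    refine integral_congr_ae (ae_of_all _ fun t => ?_)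
    simp [NNReal.smul_def, Real.coe_toNNReal _ (gaussianPDFReal_nonneg 0 1 t)]
  have hderiv : ∀ t ∈ Set.Iic u, HasDerivAt (fun s => -(c * Real.exp (-s ^ 2 / 2)))
      (gaussianPDFReal 0 1 t * t) t := by
    intro t _
    have h := (hasDerivAt_gauss c t).neg
    rw [neg_neg] at h
    have : gaussianPDFReal 0 1 t * t = c * Real.exp (-t ^ 2 / 2) * t := by rw [pdf_eq]
    rw [this]
    exact h
  have htend : Tendsto (fun s => -(c * Real.exp (-s ^ 2 / 2))) atBot (𝓝 0) := by
    simpa using (tendsto_gauss_atBot c).neg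
  have hFTC := integral_Iic_of_hasDerivAt_of_tendsto' hderiv hint htend
  rw [h1, hFTC, pdf_eq, ← hc]
  ring

lemma gaussian_cdf (x : ℝ) :
    ((gaussianReal 0 1) (Set.Iic x)).toReal = ∫ u in Set.Iic x, gaussianPDFReal 0 1 u := by
  rw [gaussianReal_apply_eq_integral 0 one_ne_zero,
    ENNReal.toReal_ofReal (integral_nonneg fun u => gaussianPDFReal_nonneg 0 1 u)]

lemma forward (h2 : Integrable (fun t : ℝ => t ^ 2) (gaussianReal 0 1)) (x : ℝ) :
    ((gaussianReal 0 1) (Set.Iic x)).toReal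
      = ∫ t in Set.Iic x, t * (t - x) ∂(gaussianReal 0 1) := by
  have ht1 := integrable_id_of_sq h2
  have hks := key_swap h2 x
  have h3 : ∫ t in Set.Iic x, t * (t - x) ∂(gaussianReal 0 1)
      = -∫ t in Set.Iic x, t * (x - t) ∂(gaussianReal 0 1) := by
    rw [← integral_neg]
    exact integral_congr_ae (ae_of_all _ fun t => by ring)
  rw [h3, ← hks.2]
  have h4 : ∫ u in Set.Iic x, (∫ t in Set.Iic u, t ∂(gaussianReal 0 1))
      = ∫ u in Set.Iic x, -gaussianPDFReal 0 1 u :=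
    integral_congr_ae (ae_of_all _ fun u => gaussian_G u ht1)
  rw [h4, integral_neg, neg_neg, gaussian_cdf]

set_option maxHeartbeats 2000000 in
lemma backward [IsProbabilityMeasure μ] [NullSingletonClass μ]
    (h2 : Integrable (fun t : ℝ => t ^ 2) μ)
    (hF : ∀ x : ℝ, (μ (Set.Iic x)).toReal = ∫ t in Set.Iic x, t * (t - x) ∂μ) :
    μ = gaussianReal 0 1 := by
  have ht1 : Integrable (fun t : ℝ => t) μ := integrable_id_of_sq h2
  set G : ℝ → ℝ := fun u => ∫ t in Set.Iic u, t ∂μ with hGdef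
  set f : ℝ → ℝ := fun u => -G u with hfdef
  have hGc : Continuous G := continuous_G h2
  have hfc : Continuous f := hGc.neg
  have hfint : ∀ x : ℝ, IntegrableOn f (Set.Iic x) volume := fun x => ((key_swap h2 x).1).neg
  have hF2 : ∀ x : ℝ, (μ (Set.Iic x)).toReal = ∫ u in Set.Iic x, f u := by
    intro x
    rw [hF x]
    have h3 : ∫ t in Set.Iic x, t * (t - x) ∂μ = -∫ t in Set.Iic x, t * (x - t) ∂μ := by
      rw [← integral_neg]; exact integral_congr_ae (ae_of_all _ fun t => by ring)
    rw [h3, ← (key_swap h2 x).2, ← integral_neg]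
  have hFprim : ∀ x : ℝ, (μ (Set.Iic x)).toReal
      = (μ (Set.Iic 0)).toReal + ∫ u in (0:ℝ)..x, f u := by
    intro x
    rw [hF2 x, hF2 0, ← intervalIntegral.integral_Iic_sub_Iic (hfint 0) (hfint x)]
    ring
  have hFderiv : ∀ x : ℝ, HasDerivAt (fun y => (μ (Set.Iic y)).toReal) (f x) x := by
    intro x
    have h := intervalIntegral.integral_hasDerivAt_right
      (hfc.intervalIntegrable 0 x) (hfc.stronglyMeasurableAtFilter volume (𝓝 x))
      hfc.continuousAt
    have h2' := h.const_add ((μ (Set.Iic 0)).toReal)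
    exact h2'.congr_of_eventuallyEq (Eventually.of_forall fun y => hFprim y)
  have hmono : Monotone (fun y => (μ (Set.Iic y)).toReal) := fun a b hab =>
    ENNReal.toReal_mono (measure_ne_top μ _) (measure_mono (Set.Iic_subset_Iic.2 hab))
  have hfnn : ∀ x : ℝ, 0 ≤ f x := by
    intro x
    have hs := hasDerivAt_iff_tendsto_slope.1 (hFderiv x)
    have hs2 := hs.mono_left (nhdsWithin_mono x (fun y (hy : y ∈ Set.Ioi x) => ne_of_gt hy))
    refine ge_of_tendsto hs2 ?_
    refine eventually_nhdsWithin_of_forall fun y (hy : x < y) => ?_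
    rw [slope_def_field]
    exact div_nonneg (sub_nonneg.2 (hmono hy.le)) (by linarith)
  set ν := volume.withDensity (fun u => ENNReal.ofReal (f u)) with hν
  have hμν : μ = ν := by
    refine Measure.ext_of_Iic μ ν fun a => ?_
    rw [hν, withDensity_apply _ measurableSet_Iic,
      ← ofReal_integral_eq_lintegral_ofReal (hfint a) (ae_of_all _ fun u => hfnn u),
      ← hF2 a, ENNReal.ofReal_toReal (measure_ne_top μ _)]
  have hGd : ∀ x : ℝ, G x = ∫ t in Set.Iic x, f t * t := by
    intro x
    show (∫ t in Set.Iic x, t ∂μ) = _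
    rw [hμν, hν, restrict_withDensity measurableSet_Iic]
    rw [show (fun u => ENNReal.ofReal (f u)) = fun u => (((f u).toNNReal : ℝ≥0) : ℝ≥0∞) from rfl]
    rw [integral_withDensity_eq_integral_smul (hfc.measurable.real_toNNReal)]
    refine integral_congr_ae (ae_of_all _ fun t => ?_)
    simp [NNReal.smul_def, Real.coe_toNNReal _ (hfnn t)]
  have hGint : ∀ x : ℝ, IntegrableOn (fun t => f t * t) (Set.Iic x) volume := by
    intro x
    have h := ht1.integrableOn (s := Set.Iic x)
    rw [IntegrableOn, hμν, hν, restrict_withDensity measurableSet_Iic,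
      integrable_withDensity_iff hfc.measurable.ennreal_ofReal
        (ae_of_all _ fun _ => ENNReal.ofReal_lt_top)] at h
    refine h.congr (ae_of_all _ fun t => ?_)
    show t * (ENNReal.ofReal (f t)).toReal = _
    rw [ENNReal.toReal_ofReal (hfnn t), mul_comm]
  have hG' : ∀ x : ℝ, HasDerivAt G (f x * x) x := by
    intro x
    have hprim : ∀ y : ℝ, G y = G 0 + ∫ u in (0:ℝ)..y, f u * u := by
      intro y
      rw [hGd y, hGd 0, ← intervalIntegral.integral_Iic_sub_Iic (hGint 0) (hGint y)]
      ring
    have hcont : Continuous fun t => f t * t := hfc.mul continuous_id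
    have h := intervalIntegral.integral_hasDerivAt_right (hcont.intervalIntegrable 0 x)
      (hcont.stronglyMeasurableAtFilter volume (𝓝 x)) hcont.continuousAt
    have h2' := h.const_add (G 0)
    exact h2'.congr_of_eventuallyEq (Eventually.of_forall fun y => hprim y)
  have hf' : ∀ x : ℝ, HasDerivAt f (-(f x * x)) x := fun x => (hG' x).neg
  have hsol : ∀ x : ℝ, f x = f 0 * Real.exp (-x ^ 2 / 2) := by
    have hφ : ∀ x : ℝ, HasDerivAt (fun y => f y * Real.exp (y ^ 2 / 2)) 0 x := by
      intro x
      have h1 : HasDerivAt (fun s : ℝ => s ^ 2 / 2) x x := by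
        have h := (hasDerivAt_pow 2 x).div_const 2
        norm_num at h
        exact h
      have h2' : HasDerivAt (fun s : ℝ => Real.exp (s ^ 2 / 2))
          (Real.exp (x ^ 2 / 2) * x) x := h1.exp
      have h3 := (hf' x).mul h2'
      exact h3.congr_deriv (by ring)
    have hconst := is_const_of_deriv_eq_zero (𝕜 := ℝ)
      (fun x => (hφ x).differentiableAt) (fun x => (hφ x).deriv)
    intro x
    have h4 := hconst x 0
    have h6 : Real.exp (-x ^ 2 / 2) * Real.exp (x ^ 2 / 2) = 1 := by
      rw [← Real.exp_add, show -x ^ 2 / 2 + x ^ 2 / 2 = 0 by ring, Real.exp_zero]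
    calc f x = f x * Real.exp (x ^ 2 / 2) * Real.exp (-x ^ 2 / 2) := by
          rw [mul_assoc, mul_comm (Real.exp (x ^ 2 / 2)), h6, mul_one]
      _ = f 0 * Real.exp ((0:ℝ) ^ 2 / 2) * Real.exp (-x ^ 2 / 2) := by rw [h4]
      _ = f 0 * Real.exp (-x ^ 2 / 2) := by
          rw [show ((0:ℝ) ^ 2 / 2) = 0 by norm_num, Real.exp_zero, mul_one]
  have hfglobal : Integrable f volume := by
    have h := (integrable_exp_neg_mul_sq (by norm_num : (0:ℝ) < 2⁻¹)).const_mul (f 0)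
    refine h.congr (ae_of_all _ fun u => ?_)
    rw [hsol u, show -u ^ 2 / 2 = -(2⁻¹:ℝ) * u ^ 2 by ring]
  have hmass : ENNReal.ofReal (∫ u, f u) = 1 := by
    have h7 : ν Set.univ = 1 := by rw [← hμν]; exact measure_univ
    rw [hν, withDensity_apply _ MeasurableSet.univ, Measure.restrict_univ] at h7
    rw [ofReal_integral_eq_lintegral_ofReal hfglobal (ae_of_all _ hfnn)]
    exact h7
  have hint_exp : ∫ u : ℝ, Real.exp (-(2⁻¹) * u ^ 2) = Real.sqrt (2 * π) := by
    rw [integral_gaussian]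
    congr 1
    field_simp
  have hf0 : f 0 = (Real.sqrt (2 * π))⁻¹ := by
    have h8 : ∫ u, f u = f 0 * Real.sqrt (2 * π) := by
      calc ∫ u, f u = ∫ u : ℝ, f 0 * Real.exp (-(2⁻¹) * u ^ 2) := by
            refine integral_congr_ae (ae_of_all _ fun u => ?_)
            rw [hsol u, show -u ^ 2 / 2 = -(2⁻¹:ℝ) * u ^ 2 by ring]
        _ = f 0 * ∫ u : ℝ, Real.exp (-(2⁻¹) * u ^ 2) := integral_const_mul _ _
        _ = f 0 * Real.sqrt (2 * π) := by rw [hint_exp]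
    rw [h8, ENNReal.ofReal_eq_one] at hmass
    have hsq : Real.sqrt (2 * π) ≠ 0 := (Real.sqrt_pos.2 (by positivity)).ne'
    rw [inv_eq_one_div, eq_div_iff hsq]
    exact hmass
  rw [hμν, hν, gaussianReal_of_var_ne_zero 0 one_ne_zero]
  congr 1
  funext u
  rw [hsol u, hf0]
  simp only [gaussianPDF]
  rw [pdf_eq]

end BetschEbnerAux

/-- Betsch–Ebner characterization: a continuous (atomless) real distribution `μ` with
mean `0` and variance `1` is the standard normal distribution if and only if its cdf
`F(x) = μ((-∞, x])` satisfies `F(x) = e_X(x) = E[X (X - x) 1{X ≤ x}]` for all `x ∈ ℝ`. -/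
theorem stdNormal_iff_cdf_eq_eX
    (μ : Measure ℝ) [IsProbabilityMeasure μ] [NullSingletonClass μ]
    (h2 : Integrable (fun t => t ^ 2) μ)
    (hmean : ∫ t, t ∂μ = 0) (hvar : ∫ t, t ^ 2 ∂μ = 1) :
    μ = gaussianReal 0 1 ↔
      ∀ x : ℝ, (μ (Set.Iic x)).toReal = ∫ t in Set.Iic x, t * (t - x) ∂μ := by
  constructor
  · intro h
    subst h
    exact fun x => BetschEbnerAux.forward h2 x
  · intro h
    exact BetschEbnerAux.backward h2 h
end

section
/- Let μ be an atomless probability measure on ℝ with finite second moment, F its cumulative distribution function, e_X(x) = ∫ t(t−x) 1{t ≤ x} dμ(t), and Δ(F) = ∫ (e_X(x) − F(x)) dμ(x). Define the symmetric kernel h(x₁, x₂) = (1/2)(min(x₁, x₂)² − x₁ x₂). Then Δ(F) = ∫∫ h(t, x) dμ(t) dμ(x) − 1/2; that is, for X₁, X₂ i.i.d. with law μ, Δ(F) = E[h(X₁, X₂)] − 1/2. -/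
open MeasureTheory

lemma diag_null (μ : Measure ℝ) [SFinite μ] [NullSingletonClass μ] :
    μ.prod μ {p : ℝ × ℝ | p.2 = p.1} = 0 := by
  have hm : MeasurableSet {p : ℝ × ℝ | p.2 = p.1} :=
    measurableSet_eq_fun measurable_snd measurable_fst
  rw [Measure.prod_apply hm]
  have : ∀ x : ℝ, μ (Prod.mk x ⁻¹' {p : ℝ × ℝ | p.2 = p.1}) = 0 := by
    intro x
    have : Prod.mk x ⁻¹' {p : ℝ × ℝ | p.2 = p.1} = {x} := by
      ext y; simp [eq_comm]
    rw [this]; exact measure_singleton x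
  simp [this]

lemma half_lemma (μ : Measure ℝ) [IsProbabilityMeasure μ] [NullSingletonClass μ]
    (f : ℝ × ℝ → ℝ) (hf : Integrable f (μ.prod μ))
    (hs : ∀ p : ℝ × ℝ, f (p.2, p.1) = f p) :
    ∫ p, (if p.2 ≤ p.1 then f p else 0) ∂(μ.prod μ)
      = (∫ p, f p ∂(μ.prod μ)) / 2 := by
  set s : Set (ℝ × ℝ) := {p | p.2 ≤ p.1} with hsdef
  have hms : MeasurableSet s := measurableSet_le measurable_snd measurable_fst
  set s' : Set (ℝ × ℝ) := {p | p.1 ≤ p.2} with hs'def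
  have hms' : MeasurableSet s' := measurableSet_le measurable_fst measurable_snd
  have hg : Integrable (s.indicator f) (μ.prod μ) := hf.indicator hms
  have hg' : Integrable (s'.indicator f) (μ.prod μ) := hf.indicator hms'
  have hswap : ∫ p, s'.indicator f p ∂(μ.prod μ) = ∫ p, s.indicator f p ∂(μ.prod μ) := by
    have := integral_prod_swap (ν := μ) (μ := μ) (s.indicator f)
    rw [← this]
    congr 1
    ext p
    simp only [Set.indicator, Prod.swap, hsdef, hs'def, Set.mem_setOf_eq]
    rw [show f (p.2, p.1) = f p from hs p]
  have hae : ∀ᵐ p ∂(μ.prod μ), s.indicator f p + s'.indicator f p = f p := by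
    have h0 : μ.prod μ {p : ℝ × ℝ | p.2 = p.1} = 0 := diag_null μ
    filter_upwards [measure_eq_zero_iff_ae_notMem.mp h0] with p hp
    simp only [Set.indicator, hsdef, hs'def, Set.mem_setOf_eq]
    rcases lt_trichotomy p.1 p.2 with h | h | h
    · rw [if_neg (not_le.mpr h), if_pos h.le]; ring
    · exact absurd h.symm hp
    · rw [if_pos h.le, if_neg (not_le.mpr h)]; ring
  have hsum : ∫ p, s.indicator f p ∂(μ.prod μ) + ∫ p, s'.indicator f p ∂(μ.prod μ)
      = ∫ p, f p ∂(μ.prod μ) := by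
    rw [← integral_add hg hg']
    exact integral_congr_ae hae
  have key : ∫ p, s.indicator f p ∂(μ.prod μ) = (∫ p, f p ∂(μ.prod μ)) / 2 := by
    rw [hswap] at hsum; linarith
  have hfun : (fun p : ℝ × ℝ => if p.2 ≤ p.1 then f p else 0) = s.indicator f := by
    ext p; simp [Set.indicator, hsdef]
  rw [hfun]
  exact key

/-- Equations (5)-(6) of the paper: for an atomless probability measure `μ` on `ℝ` with
finite second moment, cdf `F`, `e_X(x) = ∫ t (t - x) 1{t ≤ x} dμ(t)` and symmetric kernel
`h(t, x) = (1/2) ((min t x)² - t x)`, the departure measure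
`Δ(F) = ∫ (e_X(x) - F(x)) dμ(x)` equals `E[h(X₁, X₂)] - 1/2` for `X₁, X₂` i.i.d. `μ`. -/
theorem departure_measure_eq_kernel_expectation
    (μ : Measure ℝ) [IsProbabilityMeasure μ] [NullSingletonClass μ]
    (h2 : Integrable (fun t => t ^ 2) μ) :
    (∫ x, ((∫ t in Set.Iic x, t * (t - x) ∂μ) - (μ (Set.Iic x)).toReal) ∂μ) =
      (∫ x, (∫ t, (1 / 2) * ((min t x) ^ 2 - t * x) ∂μ) ∂μ) - 1 / 2 := by
  -- integrability of t
  have h1 : Integrable (fun t : ℝ => t) μ := by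
    refine (h2.add (integrable_const 1)).mono' ?_ ?_
    · exact aestronglyMeasurable_id
    · filter_upwards with t
      simp only [Real.norm_eq_abs, Pi.add_apply]
      nlinarith [sq_nonneg (|t| - 1), sq_abs t]
  -- product integrability
  have hxt : Integrable (fun p : ℝ × ℝ => p.1 * p.2) (μ.prod μ) := h1.mul_prod h1
  have ht2 : Integrable (fun p : ℝ × ℝ => p.2 ^ 2) (μ.prod μ) := by
    have := (integrable_const (1:ℝ) (μ := μ)).mul_prod h2
    simpa using this
  have hx2 : Integrable (fun p : ℝ × ℝ => p.1 ^ 2) (μ.prod μ) := by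
    have := h2.mul_prod (integrable_const (1:ℝ) (μ := μ))
    simpa using this
  have hmin : Integrable (fun p : ℝ × ℝ => (min p.1 p.2) ^ 2) (μ.prod μ) := by
    refine (hx2.add ht2).mono' ?_ ?_
    · exact ((continuous_fst.min continuous_snd).pow 2).aestronglyMeasurable
    · filter_upwards with p
      simp only [Real.norm_eq_abs, abs_le, Pi.add_apply]
      constructor
      · nlinarith [sq_nonneg p.1, sq_nonneg p.2, sq_nonneg (min p.1 p.2)]
      · rcases min_choice p.1 p.2 with h | h <;> rw [h] <;> nlinarith [sq_nonneg p.1, sq_nonneg p.2]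
  have hxt2 : Integrable (fun p : ℝ × ℝ => p.2 * p.1) (μ.prod μ) := by
    have e : (fun p : ℝ × ℝ => p.2 * p.1) = fun p : ℝ × ℝ => p.1 * p.2 := by
      funext p; ring
    rw [e]; exact hxt
  set m : ℝ := ∫ t, t ∂μ with hm
  set S : ℝ := ∫ p, (if p.2 ≤ p.1 then p.2 ^ 2 else 0) ∂(μ.prod μ) with hS
  -- rewrite the integrand of the LHS as a single inner integral
  have hinner : ∀ x : ℝ, (∫ t in Set.Iic x, t * (t - x) ∂μ) - (μ (Set.Iic x)).toReal
      = ∫ t, (if t ≤ x then t * (t - x) - 1 else 0) ∂μ := by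
    intro x
    have hA : Integrable (fun t : ℝ => if t ≤ x then t * (t - x) else 0) μ := by
      have h0 : Integrable (fun t : ℝ => t * (t - x)) μ := by
        have e : (fun t : ℝ => t * (t - x)) = fun t : ℝ => t ^ 2 - x * t := by
          funext t; ring
        rw [e]; exact h2.sub (h1.const_mul x)
      have := h0.indicator (measurableSet_Iic (a := x))
      refine this.congr ?_
      filter_upwards with t
      simp [Set.indicator_apply, Set.mem_Iic]
    have hB : Integrable (fun t : ℝ => if t ≤ x then (1 : ℝ) else 0) μ := by
      have := (integrable_const (1 : ℝ) (μ := μ)).indicator (measurableSet_Iic (a := x))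
      refine this.congr ?_
      filter_upwards with t
      simp [Set.indicator_apply, Set.mem_Iic]
    have e1 : (∫ t in Set.Iic x, t * (t - x) ∂μ)
        = ∫ t, (if t ≤ x then t * (t - x) else 0) ∂μ := by
      rw [← integral_indicator (measurableSet_Iic (a := x))]
      refine integral_congr_ae (Filter.Eventually.of_forall fun t => ?_)
      simp [Set.indicator_apply, Set.mem_Iic]
    have e2 : (μ (Set.Iic x)).toReal = ∫ t, (if t ≤ x then (1 : ℝ) else 0) ∂μ := by
      rw [← measureReal_def, ← integral_indicator_one (measurableSet_Iic (a := x))]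
      refine integral_congr_ae (Filter.Eventually.of_forall fun t => ?_)
      simp [Set.indicator_apply, Set.mem_Iic]
    rw [e1, e2, ← integral_sub hA hB]
    congr 1; funext t
    by_cases h : t ≤ x <;> simp [h]
  simp only [hinner]
  -- Fubini on the left-hand side
  have hG : Integrable (Function.uncurry fun x t : ℝ => if t ≤ x then t * (t - x) - 1 else 0)
      (μ.prod μ) := by
    have h0 : Integrable (fun p : ℝ × ℝ => p.2 * (p.2 - p.1) - 1) (μ.prod μ) := by
      have e : (fun p : ℝ × ℝ => p.2 * (p.2 - p.1) - 1)
          = fun p : ℝ × ℝ => p.2 ^ 2 - p.2 * p.1 - 1 := by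
        funext p; ring
      rw [e]; exact (ht2.sub hxt2).sub (integrable_const 1)
    have hmsle : MeasurableSet {p : ℝ × ℝ | p.2 ≤ p.1} :=
      measurableSet_le measurable_snd measurable_fst
    have := h0.indicator hmsle
    refine this.congr ?_
    filter_upwards with p
    simp [Function.uncurry, Set.indicator_apply]
  have hL : (∫ x, ∫ t, (if t ≤ x then t * (t - x) - 1 else 0) ∂μ ∂μ)
      = ∫ p, (if p.2 ≤ p.1 then p.2 * (p.2 - p.1) - 1 else 0) ∂(μ.prod μ) :=
    integral_integral hG
  rw [hL]
  -- split the product integral on the left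
  have hq : Integrable (fun p : ℝ × ℝ => if p.2 ≤ p.1 then p.2 ^ 2 else 0) (μ.prod μ) := by
    have hmsle : MeasurableSet {p : ℝ × ℝ | p.2 ≤ p.1} :=
      measurableSet_le measurable_snd measurable_fst
    refine (ht2.indicator hmsle).congr ?_
    filter_upwards with p; simp [Set.indicator_apply]
  have hqx : Integrable (fun p : ℝ × ℝ => if p.2 ≤ p.1 then p.1 * p.2 else 0) (μ.prod μ) := by
    have hmsle : MeasurableSet {p : ℝ × ℝ | p.2 ≤ p.1} :=
      measurableSet_le measurable_snd measurable_fst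
    refine (hxt.indicator hmsle).congr ?_
    filter_upwards with p; simp [Set.indicator_apply]
  have hq1 : Integrable (fun p : ℝ × ℝ => if p.2 ≤ p.1 then (1 : ℝ) else 0) (μ.prod μ) := by
    have hmsle : MeasurableSet {p : ℝ × ℝ | p.2 ≤ p.1} :=
      measurableSet_le measurable_snd measurable_fst
    refine ((integrable_const (1 : ℝ)).indicator hmsle).congr ?_
    filter_upwards with p; simp [Set.indicator_apply]
  have hsplit : (∫ p, (if p.2 ≤ p.1 then p.2 * (p.2 - p.1) - 1 else 0) ∂(μ.prod μ))
      = S - (∫ p, (if p.2 ≤ p.1 then p.1 * p.2 else 0) ∂(μ.prod μ))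
        - (∫ p, (if p.2 ≤ p.1 then (1 : ℝ) else 0) ∂(μ.prod μ)) := by
    have e3 : (fun p : ℝ × ℝ => if p.2 ≤ p.1 then p.2 * (p.2 - p.1) - 1 else 0)
        = fun p : ℝ × ℝ => ((if p.2 ≤ p.1 then p.2 ^ 2 else 0)
            - (if p.2 ≤ p.1 then p.1 * p.2 else 0)) - (if p.2 ≤ p.1 then (1 : ℝ) else 0) := by
      funext p
      by_cases h : p.2 ≤ p.1 <;> simp [h] <;> ring
    have hq2 : Integrable (fun p : ℝ × ℝ => (if p.2 ≤ p.1 then p.2 ^ 2 else 0)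
        - (if p.2 ≤ p.1 then p.1 * p.2 else 0)) (μ.prod μ) := hq.sub hqx
    rw [hS, e3, integral_sub hq2 hq1, integral_sub hq hqx]
  rw [hsplit]
  -- evaluate the two symmetric pieces on the left
  have hvx : (∫ p, (if p.2 ≤ p.1 then p.1 * p.2 else 0) ∂(μ.prod μ)) = m * m / 2 := by
    have e5 := integral_prod_mul (μ := μ) (ν := μ) (fun x : ℝ => x) (fun x : ℝ => x)
    rw [half_lemma μ _ hxt (fun p => mul_comm p.2 p.1), hm, e5]
  have hv1 : (∫ p, (if p.2 ≤ p.1 then (1 : ℝ) else 0) ∂(μ.prod μ)) = 1 / 2 := by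
    rw [half_lemma μ _ (integrable_const 1) (fun p => rfl)]
    simp
  rw [hvx, hv1]
  -- now the right-hand side
  have hH : Integrable (Function.uncurry fun x t : ℝ => (1 / 2) * ((min t x) ^ 2 - t * x))
      (μ.prod μ) := by
    have h0 : Integrable (fun p : ℝ × ℝ => (min p.1 p.2) ^ 2 - p.2 * p.1) (μ.prod μ) :=
      hmin.sub hxt2
    refine (h0.const_mul (1 / 2)).congr ?_
    filter_upwards with p
    simp [Function.uncurry, min_comm p.2 p.1]
  have hR : (∫ x, ∫ t, (1 / 2) * ((min t x) ^ 2 - t * x) ∂μ ∂μ)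
      = ∫ p, (1 / 2) * ((min p.2 p.1) ^ 2 - p.2 * p.1) ∂(μ.prod μ) :=
    integral_integral hH
  rw [hR]
  have hRsplit : (∫ p, (1 / 2) * ((min p.2 p.1) ^ 2 - p.2 * p.1) ∂(μ.prod μ))
      = (1 / 2) * ((∫ p : ℝ × ℝ, (min p.1 p.2) ^ 2 ∂(μ.prod μ)) - m * m) := by
    have e : (fun p : ℝ × ℝ => (1 / 2) * ((min p.2 p.1) ^ 2 - p.2 * p.1))
        = fun p : ℝ × ℝ => (1 / 2) * ((min p.1 p.2) ^ 2 - p.2 * p.1) := by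
      funext p; rw [min_comm]
    have e2 : (∫ p : ℝ × ℝ, p.2 * p.1 ∂(μ.prod μ)) = m * m := by
      have e4 : (fun p : ℝ × ℝ => p.2 * p.1) = fun p : ℝ × ℝ => p.1 * p.2 := by
        funext p; ring
      rw [e4, hm]
      exact integral_prod_mul (μ := μ) (ν := μ) (fun x : ℝ => x) (fun x : ℝ => x)
    rw [e, integral_const_mul, integral_sub hmin hxt2, e2]
  rw [hRsplit]
  -- relate S to the integral of min²
  have hSmin : S = (∫ p : ℝ × ℝ, (min p.1 p.2) ^ 2 ∂(μ.prod μ)) / 2 := by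
    rw [hS, ← half_lemma μ _ hmin (fun p => by rw [min_comm])]
    refine integral_congr_ae (Filter.Eventually.of_forall fun p => ?_)
    by_cases h : p.2 ≤ p.1
    · simp [h, min_eq_right h]
    · simp [h]
  rw [hSmin]
  ring
end

section
/- Let n ≥ 2, let x₁, …, xₙ be real numbers, and let c be any real number. Define the kernel h(a, b) = (1/2)(min(a, b)² − a b). Then Σ_{1 ≤ j < i ≤ n} h(xᵢ − c, xⱼ − c) = Σ_{1 ≤ j < i ≤ n} h(xᵢ, xⱼ) + c · Σ_{1 ≤ j < i ≤ n} |xᵢ − xⱼ| / 2. In particular, taking c = x̄ (the sample mean), the centered U-statistic Δ̂₁* = (1/C(n,2)) Σ_{j<i} h(xᵢ − x̄, xⱼ − x̄) satisfies Δ̂₁* = Δ̂₁ + x̄ U₁, where Δ̂₁ = (1/C(n,2)) Σ_{j<i} h(xᵢ, xⱼ) and U₁ = (1/C(n,2)) Σ_{j<i} |xᵢ − xⱼ|/2. -/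
open Finset

lemma kernel_shift (a b c : ℝ) :
    (1 / 2) * ((min (a - c) (b - c)) ^ 2 - (a - c) * (b - c)) =
      (1 / 2) * ((min a b) ^ 2 - a * b) + c * (|a - b| / 2) := by
  rcases le_total a b with hab | hab
  · rw [min_eq_left (by linarith), min_eq_left hab, abs_of_nonpos (by linarith)]
    ring
  · rw [min_eq_right (by linarith), min_eq_right hab, abs_of_nonneg (by linarith)]
    ring

/-- Remark 1 of the paper (location decomposition): with kernel
`h(a, b) = (1/2)((min a b)² - a b)`, for any center `c`,
`Σ_{j<i} h(xᵢ - c, xⱼ - c) = Σ_{j<i} h(xᵢ, xⱼ) + c Σ_{j<i} |xᵢ - xⱼ| / 2`.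
In particular, with `c = x̄` the sample mean, the centered U-statistic satisfies
`Δ̂₁* = Δ̂₁ + x̄ U₁` where `U₁` is the U-statistic with kernel `|a - b| / 2`. -/
theorem centered_kernel_sum_decomposition
    (n : ℕ) (hn : 2 ≤ n) (x : Fin n → ℝ) (c : ℝ)
    (h : ℝ → ℝ → ℝ) (hdef : ∀ a b, h a b = (1 / 2) * ((min a b) ^ 2 - a * b)) :
    (∑ i : Fin n, ∑ j ∈ Finset.univ.filter (fun j => j < i), h (x i - c) (x j - c) =
      (∑ i : Fin n, ∑ j ∈ Finset.univ.filter (fun j => j < i), h (x i) (x j)) +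
        c * ∑ i : Fin n, ∑ j ∈ Finset.univ.filter (fun j => j < i), |x i - x j| / 2) ∧
    ((1 / (n.choose 2 : ℝ)) *
        ∑ i : Fin n, ∑ j ∈ Finset.univ.filter (fun j => j < i),
          h (x i - (∑ k : Fin n, x k) / n) (x j - (∑ k : Fin n, x k) / n) =
      (1 / (n.choose 2 : ℝ)) *
        (∑ i : Fin n, ∑ j ∈ Finset.univ.filter (fun j => j < i), h (x i) (x j)) +
        ((∑ k : Fin n, x k) / n) * ((1 / (n.choose 2 : ℝ)) *
          ∑ i : Fin n, ∑ j ∈ Finset.univ.filter (fun j => j < i), |x i - x j| / 2)) := by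
  have key : ∀ c : ℝ,
      ∑ i : Fin n, ∑ j ∈ Finset.univ.filter (fun j => j < i), h (x i - c) (x j - c) =
      (∑ i : Fin n, ∑ j ∈ Finset.univ.filter (fun j => j < i), h (x i) (x j)) +
        c * ∑ i : Fin n, ∑ j ∈ Finset.univ.filter (fun j => j < i), |x i - x j| / 2 := by
    intro c
    rw [Finset.mul_sum, ← Finset.sum_add_distrib]
    refine Finset.sum_congr rfl fun i _ => ?_
    rw [Finset.mul_sum, ← Finset.sum_add_distrib]
    refine Finset.sum_congr rfl fun j _ => ?_
    rw [hdef, hdef, kernel_shift]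
  refine ⟨key c, ?_⟩
  rw [key, mul_add]
  ring
end
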